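/- arXiv:1904.08437 — 4 statements merged into one kernel-verified Lean document; each statement's English description precedes it below -/
import Mathlib

section
/- Given compositions α of n, and a splitting point 0 ≤ m ≤ n, there is exactly one pair of compositions (β, γ) with |β| = m, |γ| = n − m, and either β·γ = α (concatenation) or β⊙γ = α (near-concatenation). -/
/-!
Cutting `α` after total size `m` lands either on a boundary between two parts, giving a
concatenation, or strictly inside a part, which is then split in two, giving a
near-concatenation. Since all parts are positive, peeling off the first part of `α` reduces
both existence and uniqueness to the same question for `m - α₁` and the remaining parts.
-/

/-- Near-concatenation of compositions: merge the last part of `β` with the first part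
of `γ` (intended for nonempty `β`, `γ`). -/
def nearConcat (β γ : List ℕ) : List ℕ :=
  β.dropLast ++ (β.getLastD 0 + γ.headD 0) :: γ.tail

def SplitsInto (α β γ : List ℕ) : Prop :=
  β ++ γ = α ∨ (β ≠ [] ∧ γ ≠ [] ∧ nearConcat β γ = α)

def IsSplit (m : ℕ) (α β γ : List ℕ) : Prop :=
  (∀ x ∈ β, 0 < x) ∧ (∀ x ∈ γ, 0 < x) ∧ β.sum = m ∧ SplitsInto α β γ

def splitAtSum : ℕ → List ℕ → List ℕ × List ℕ
  | 0, α => ([], α)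
  | _ + 1, [] => ([], [])  -- junk: `m` exceeds `|α|`
  | m + 1, a :: α =>
    if m + 1 < a then ([m + 1], (a - (m + 1)) :: α)
    else ((a :: (splitAtSum (m + 1 - a) α).1), (splitAtSum (m + 1 - a) α).2)

lemma sum_nearConcat (β γ : List ℕ) : (nearConcat β γ).sum = β.sum + γ.sum := by
  rcases List.eq_nil_or_concat β with rfl | ⟨β', b, rfl⟩ <;> cases γ <;>
    simp [nearConcat, add_assoc, add_left_comm]

lemma nearConcat_cons (b : ℕ) {β : List ℕ} (hβ : β ≠ []) (γ : List ℕ) :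
    nearConcat (b :: β) γ = b :: nearConcat β γ := by
  obtain ⟨c, β, rfl⟩ := List.exists_cons_of_ne_nil hβ
  simp [nearConcat, List.getLastD_eq_getLast?, List.getLast?_cons_cons]

lemma nearConcat_singleton_cons (b c : ℕ) (γ : List ℕ) :
    nearConcat [b] (c :: γ) = (b + c) :: γ := by
  simp [nearConcat]

lemma SplitsInto.sum_eq {α β γ : List ℕ} (h : SplitsInto α β γ) : α.sum = β.sum + γ.sum := by
  rcases h with rfl | ⟨-, -, rfl⟩
  · exact List.sum_append
  · exact sum_nearConcat β γ

lemma splitsInto_nil_left {α γ : List ℕ} : SplitsInto α [] γ ↔ γ = α := by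
  simp [SplitsInto]

lemma splitsInto_cons_iff {a : ℕ} {α β γ : List ℕ} :
    SplitsInto (a :: α) β γ ↔ (β = [] ∧ γ = a :: α) ∨
      (∃ b c, β = [b] ∧ γ = c :: α ∧ b + c = a) ∨ (∃ β', β = a :: β' ∧ SplitsInto α β' γ) := by
  constructor
  · rintro (h | ⟨hβ, hγ, h⟩)
    · rcases β with _ | ⟨b, β⟩
      · exact Or.inl ⟨rfl, h⟩
      · obtain ⟨rfl, rfl⟩ := List.cons_eq_cons.1 h
        exact Or.inr (Or.inr ⟨β, rfl, Or.inl rfl⟩)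
    · obtain ⟨b, β, rfl⟩ := List.exists_cons_of_ne_nil hβ
      rcases eq_or_ne β [] with rfl | hβ'
      · obtain ⟨c, γ, rfl⟩ := List.exists_cons_of_ne_nil hγ
        rw [nearConcat_singleton_cons, List.cons_eq_cons] at h
        exact Or.inr (Or.inl ⟨b, c, rfl, h.2 ▸ rfl, h.1⟩)
      · rw [nearConcat_cons b hβ', List.cons_eq_cons] at h
        obtain ⟨rfl, h⟩ := h
        exact Or.inr (Or.inr ⟨β, rfl, Or.inr ⟨hβ', hγ, h⟩⟩)
  · rintro (⟨rfl, rfl⟩ | ⟨b, c, rfl, rfl, rfl⟩ | ⟨β, rfl, h | ⟨hβ, hγ, h⟩⟩)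
    · exact Or.inl rfl
    · exact Or.inr ⟨by simp, by simp, nearConcat_singleton_cons b c α⟩
    · exact Or.inl (h ▸ rfl)
    · exact Or.inr ⟨by simp, hγ, by rw [nearConcat_cons a hβ, h]⟩

lemma List.eq_nil_of_forall_pos_of_sum_eq_zero {l : List ℕ} (hl : ∀ x ∈ l, 0 < x) (hs : l.sum = 0) : l = [] :=
  List.eq_nil_iff_forall_not_mem.2 fun x hx =>
    (hl x hx).ne' (List.sum_eq_zero_iff.1 hs x hx)

lemma isSplit_zero_iff {α β γ : List ℕ} (hα : ∀ x ∈ α, 0 < x) :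
    IsSplit 0 α β γ ↔ β = [] ∧ γ = α := by
  constructor
  · rintro ⟨hβ, -, hs, h⟩
    obtain rfl := List.eq_nil_of_forall_pos_of_sum_eq_zero hβ hs
    exact ⟨rfl, splitsInto_nil_left.1 h⟩
  · rintro ⟨rfl, rfl⟩
    exact ⟨by simp, hα, rfl, splitsInto_nil_left.2 rfl⟩

lemma isSplit_cons_iff {m a : ℕ} {α β γ : List ℕ} (hα : ∀ x ∈ a :: α, 0 < x) (hm : 0 < m) :
    IsSplit m (a :: α) β γ ↔ (m < a ∧ β = [m] ∧ γ = (a - m) :: α) ∨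
      (a ≤ m ∧ ∃ β', β = a :: β' ∧ IsSplit (m - a) α β' γ) := by
  have ha : 0 < a := hα a List.mem_cons_self
  have hα' : ∀ x ∈ α, 0 < x := fun x hx => hα x (List.mem_cons_of_mem a hx)
  constructor
  · rintro ⟨hβ, hγ, hs, hsplit⟩
    rcases splitsInto_cons_iff.1 hsplit with ⟨rfl, -⟩ | ⟨b, c, rfl, rfl, rfl⟩ | ⟨β, rfl, h⟩
    · rw [List.sum_nil] at hs; omega
    · have hc : 0 < c := hγ c List.mem_cons_self
      simp only [List.sum_singleton] at hs
      subst hs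
      exact Or.inl ⟨by omega, rfl, by simp⟩
    · have hβ' : ∀ x ∈ β, 0 < x := fun x hx => hβ x (List.mem_cons_of_mem a hx)
      rw [List.sum_cons] at hs
      exact Or.inr ⟨by omega, β, rfl, hβ', hγ, by omega, h⟩
  · rintro (⟨hma, rfl, rfl⟩ | ⟨ham, β, rfl, hβ, hγ, hs, h⟩)
    · refine ⟨by simpa using hm, ?_, List.sum_singleton, ?_⟩
      · simpa [hma] using hα'
      · exact splitsInto_cons_iff.2 (Or.inr (Or.inl ⟨m, a - m, rfl, rfl, by omega⟩))
    · refine ⟨by simpa [ha] using hβ, hγ, by rw [List.sum_cons, hs]; omega, ?_⟩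
      exact splitsInto_cons_iff.2 (Or.inr (Or.inr ⟨β, rfl, h⟩))

theorem isSplit_iff_eq_splitAtSum {m : ℕ} {α β γ : List ℕ} (hα : ∀ x ∈ α, 0 < x)
    (hm : m ≤ α.sum) : IsSplit m α β γ ↔ (β, γ) = splitAtSum m α := by
  induction α generalizing m β γ with
  | nil =>
    obtain rfl : m = 0 := by simpa using hm
    simpa [splitAtSum] using isSplit_zero_iff hα
  | cons a α ih =>
    rcases m with _ | m
    · simpa [splitAtSum] using isSplit_zero_iff hα
    rw [isSplit_cons_iff hα m.succ_pos, splitAtSum]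
    split_ifs with hma
    · simp [hma]
    · have hα' : ∀ x ∈ α, 0 < x := fun x hx => hα x (List.mem_cons_of_mem a hx)
      rw [List.sum_cons] at hm
      simp only [hma, false_and, false_or, not_lt.1 hma, true_and, Nat.succ_eq_add_one, ih hα' (show m + 1 - a ≤ α.sum by omega), Prod.ext_iff]
      constructor
      · rintro ⟨β, rfl, rfl, rfl⟩
        exact ⟨rfl, rfl⟩
      · rintro ⟨rfl, rfl⟩
        exact ⟨_, rfl, rfl, rfl⟩

/-- For a composition `α` of `n` and `0 ≤ m ≤ n`, there is exactly one pair of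
compositions `(β, γ)` with `|β| = m`, `|γ| = n - m`, and `β·γ = α` (concatenation) or
`β⊙γ = α` (near-concatenation). -/
theorem existsUnique_split (n m : ℕ) (α : List ℕ)
    (hα : ∀ x ∈ α, 0 < x) (hsum : α.sum = n) (hm : m ≤ n) :
    ∃! p : List ℕ × List ℕ,
      (∀ x ∈ p.1, 0 < x) ∧ (∀ x ∈ p.2, 0 < x) ∧ p.1.sum = m ∧ p.2.sum = n - m ∧
      (p.1 ++ p.2 = α ∨ (p.1 ≠ [] ∧ p.2 ≠ [] ∧ nearConcat p.1 p.2 = α)) := by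
  subst hsum
  refine ⟨splitAtSum m α, ?_, ?_⟩
  · obtain ⟨hβ, hγ, hs, hsplit⟩ := (isSplit_iff_eq_splitAtSum hα hm).2 rfl
    refine ⟨hβ, hγ, hs, ?_, hsplit⟩
    rw [hsplit.sum_eq, hs, Nat.add_sub_cancel_left]
  · rintro ⟨β, γ⟩ ⟨hβ, hγ, hs, -, hsplit⟩
    exact (isSplit_iff_eq_splitAtSum hα hm).1 ⟨hβ, hγ, hs, hsplit⟩
end

section
/- The coproduct Δ(α) = ∑ C(|α|, |β|) β ⊗ γ, summed over all pairs of compositions (β, γ) with β·γ = α or β⊙γ = α, is coassociative on the free commutative algebra generated by integer compositions (with the composition (n) identified with the n-th power of (1)). -/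
open TensorProduct

/-- The generating set: integer compositions with more than one part, together with the
composition `(1)`. (One-part compositions `(n)` are identified with `(1)^n`.) -/
abbrev CompGen := {l : List ℕ // (∀ x ∈ l, 0 < x) ∧ (1 < l.length ∨ l = [1])}

/-- The free commutative algebra generated by integer compositions. -/
abbrev HComp := MvPolynomial CompGen ℝ

/-- All ways to write `α = β·γ` (concatenation). -/
def concatSplits (α : List ℕ) : List (List ℕ × List ℕ) :=
  (List.range (α.length + 1)).map (fun i => (α.take i, α.drop i))

/-- All ways to write `α = β⊙γ` (near-concatenation of nonempty compositions). -/
def nearSplits (α : List ℕ) : List (List ℕ × List ℕ) :=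
  ((List.range α.length).map (fun i =>
    (List.range (α.getD i 0 - 1)).map (fun j =>
      (α.take i ++ [j + 1], (α.getD i 0 - (j + 1)) :: α.drop (i + 1))))).flatten

/-- All pairs `(β, γ)` with `β·γ = α` or `β⊙γ = α`. -/
def splits (α : List ℕ) : List (List ℕ × List ℕ) := concatSplits α ++ nearSplits α

/-- Interpret a composition as an element of `HComp`, identifying the one-part
composition `(n)` with `(1)^n`. -/
noncomputable def emb (l : List ℕ) : HComp :=
  if h : (∀ x ∈ l, 0 < x) ∧ 1 < l.length then MvPolynomial.X ⟨l, h.1, Or.inl h.2⟩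
  else (MvPolynomial.X (⟨[1], by simp⟩ : CompGen) : HComp) ^ l.sum

/-- The coproduct on a composition: `Δ(α) = ∑ C(|α|,|β|) β ⊗ γ` over all pairs with
`β·γ = α` or `β⊙γ = α`. -/
noncomputable def coprodGen (l : List ℕ) : HComp ⊗[ℝ] HComp :=
  ((splits l).map (fun p =>
    (l.sum.choose p.1.sum : ℝ) • (emb p.1 ⊗ₜ[ℝ] emb p.2))).sum

/-- The coproduct, extended multiplicatively (as an algebra map) to `HComp`. -/
noncomputable def coprod : HComp →ₐ[ℝ] HComp ⊗[ℝ] HComp :=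
  MvPolynomial.aeval (fun a : CompGen => coprodGen a.1)


/-! ### Auxiliary machinery -/

def sp1 : List ℕ → ℕ → List ℕ
  | _, 0 => []
  | [], _ + 1 => []
  | x :: l, k + 1 => if k + 1 < x then [k+1] else x :: sp1 l (k + 1 - x)

def sp2 : List ℕ → ℕ → List ℕ
  | l, 0 => l
  | [], _ + 1 => []
  | x :: l, k + 1 => if k + 1 < x then (x - (k+1)) :: l else sp2 l (k + 1 - x)

@[simp] lemma sp1_zero (a : List ℕ) : sp1 a 0 = [] := by cases a <;> rfl
@[simp] lemma sp2_zero (a : List ℕ) : sp2 a 0 = a := by cases a <;> rfl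
@[simp] lemma sp1_nil (k : ℕ) : sp1 [] k = [] := by cases k <;> rfl
@[simp] lemma sp2_nil (k : ℕ) : sp2 [] k = [] := by cases k <;> simp [sp2]

lemma sp1_cons_lt {x k : ℕ} (l : List ℕ) (h1 : 0 < k) (h2 : k < x) :
    sp1 (x :: l) k = [k] := by
  obtain ⟨k, rfl⟩ := Nat.exists_eq_succ_of_ne_zero h1.ne'; simp [sp1, h2]

lemma sp1_cons_ge {x k : ℕ} (l : List ℕ) (h1 : 0 < k) (h2 : x ≤ k) :
    sp1 (x :: l) k = x :: sp1 l (k - x) := by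
  obtain ⟨k, rfl⟩ := Nat.exists_eq_succ_of_ne_zero h1.ne'; simp [sp1, Nat.not_lt.2 h2]

lemma sp2_cons_lt {x k : ℕ} (l : List ℕ) (h1 : 0 < k) (h2 : k < x) :
    sp2 (x :: l) k = (x - k) :: l := by
  obtain ⟨k, rfl⟩ := Nat.exists_eq_succ_of_ne_zero h1.ne'; simp [sp2, h2]

lemma sp2_cons_ge {x k : ℕ} (l : List ℕ) (h1 : 0 < k) (h2 : x ≤ k) :
    sp2 (x :: l) k = sp2 l (k - x) := by
  obtain ⟨k, rfl⟩ := Nat.exists_eq_succ_of_ne_zero h1.ne'; simp [sp2, Nat.not_lt.2 h2]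

lemma sp1_sum (a : List ℕ) (k : ℕ) : (sp1 a k).sum = min k a.sum := by
  induction a generalizing k with
  | nil => simp
  | cons x l ih =>
    rcases Nat.eq_zero_or_pos k with rfl | hk
    · simp
    rcases lt_or_ge k x with h | h
    · rw [sp1_cons_lt l hk h]; simp; omega
    · rw [sp1_cons_ge l hk h]; simp [ih]; omega

lemma sp2_sum (a : List ℕ) (k : ℕ) : (sp2 a k).sum = a.sum - k := by
  induction a generalizing k with
  | nil => simp
  | cons x l ih =>
    rcases Nat.eq_zero_or_pos k with rfl | hk
    · simp
    rcases lt_or_ge k x with h | h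
    · rw [sp2_cons_lt l hk h]; simp; omega
    · rw [sp2_cons_ge l hk h]; simp [ih]; omega

lemma sp1_pos {a : List ℕ} (ha : ∀ x ∈ a, 0 < x) (k : ℕ) : ∀ y ∈ sp1 a k, 0 < y := by
  induction a generalizing k with
  | nil => simp
  | cons x l ih =>
    rcases Nat.eq_zero_or_pos k with rfl | hk
    · simp
    rcases lt_or_ge k x with h | h
    · rw [sp1_cons_lt l hk h]; simpa using hk
    · rw [sp1_cons_ge l hk h]
      intro y hy
      rcases List.mem_cons.1 hy with rfl | hy
      · exact ha _ (List.mem_cons_self)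
      · exact ih (fun z hz => ha z (List.mem_cons_of_mem _ hz)) _ y hy

lemma sp2_pos {a : List ℕ} (ha : ∀ x ∈ a, 0 < x) (k : ℕ) : ∀ y ∈ sp2 a k, 0 < y := by
  induction a generalizing k with
  | nil => simp
  | cons x l ih =>
    rcases Nat.eq_zero_or_pos k with rfl | hk
    · exact ha
    rcases lt_or_ge k x with h | h
    · rw [sp2_cons_lt l hk h]
      intro y hy
      rcases List.mem_cons.1 hy with rfl | hy
      · omega
      · exact ha y (List.mem_cons_of_mem _ hy)
    · rw [sp2_cons_ge l hk h]
      exact ih (fun z hz => ha z (List.mem_cons_of_mem _ hz)) _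


lemma sp1_sp1 (a : List ℕ) {j k : ℕ} (h : j ≤ k) : sp1 (sp1 a k) j = sp1 a j := by
  induction a generalizing j k with
  | nil => simp
  | cons x l ih =>
    rcases Nat.eq_zero_or_pos j with rfl | hj
    · simp
    have hk : 0 < k := lt_of_lt_of_le hj h
    rcases lt_or_ge k x with hkx | hkx
    · rw [sp1_cons_lt l hk hkx]
      rcases lt_or_ge j k with hjk | hjk
      · rw [sp1_cons_lt [] hj hjk, sp1_cons_lt l hj (hjk.trans hkx)]
      · have : j = k := le_antisymm h hjk
        subst this
        rw [sp1_cons_ge [] hj le_rfl, sp1_cons_lt l hj hkx]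
        simp
    · rw [sp1_cons_ge l hk hkx]
      rcases lt_or_ge j x with hjx | hjx
      · rw [sp1_cons_lt _ hj hjx, sp1_cons_lt l hj hjx]
      · rw [sp1_cons_ge _ hj hjx, sp1_cons_ge l hj hjx, ih (by omega)]

lemma sp2_sp1 (a : List ℕ) {j k : ℕ} (h : j ≤ k) :
    sp2 (sp1 a k) j = sp1 (sp2 a j) (k - j) := by
  induction a generalizing j k with
  | nil => simp
  | cons x l ih =>
    rcases Nat.eq_zero_or_pos j with rfl | hj
    · simp
    have hk : 0 < k := lt_of_lt_of_le hj h
    rcases lt_or_ge k x with hkx | hkx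
    · rw [sp1_cons_lt l hk hkx, sp2_cons_lt l hj (lt_of_le_of_lt h hkx)]
      rcases lt_or_ge j k with hjk | hjk
      · rw [sp2_cons_lt [] hj hjk]
        rcases Nat.eq_zero_or_pos (k - j) with h0 | hpos
        · omega
        · rw [sp1_cons_lt l hpos (by omega)]
      · have : j = k := le_antisymm h hjk
        subst this
        rw [sp2_cons_ge [] hj le_rfl]
        simp
    · rw [sp1_cons_ge l hk hkx]
      rcases lt_or_ge j x with hjx | hjx
      · rw [sp2_cons_lt _ hj hjx, sp2_cons_lt l hj hjx,
          sp1_cons_ge (x := x - j) (k := k - j) l (by omega) (by omega)]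
        have h2 : k - j - (x - j) = k - x := by omega
        rw [h2]
      · rw [sp2_cons_ge _ hj hjx, sp2_cons_ge l hj hjx, ih (by omega)]
        congr 1; omega

lemma sp2_sp2 (a : List ℕ) {j k : ℕ} (h : j ≤ k) :
    sp2 (sp2 a j) (k - j) = sp2 a k := by
  induction a generalizing j k with
  | nil => simp
  | cons x l ih =>
    rcases Nat.eq_zero_or_pos j with rfl | hj
    · simp
    have hk : 0 < k := lt_of_lt_of_le hj h
    rcases lt_or_ge j x with hjx | hjx
    · rw [sp2_cons_lt l hj hjx]
      rcases lt_or_ge k x with hkx | hkx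
      · rcases Nat.eq_zero_or_pos (k - j) with h0 | hpos
        · rw [h0, sp2_zero, sp2_cons_lt l hk hkx]
          have : j = k := by omega
          subst this; rfl
        · rw [sp2_cons_lt l hpos (by omega), sp2_cons_lt l hk hkx]
          congr 1; omega
      · rw [sp2_cons_ge l (by omega) (by omega), sp2_cons_ge l hk hkx]
        congr 1; omega
    · rw [sp2_cons_ge l hj hjx]
      have hkj : k - j = (k - x) - (j - x) := by omega
      rw [hkj, ih (by omega), sp2_cons_ge l hk (by omega)]


lemma concatSplits_cons (x : ℕ) (l : List ℕ) :
    concatSplits (x :: l) = ([], x :: l) :: (concatSplits l).map (fun p => (x :: p.1, p.2)) := by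
  simp [concatSplits, List.range_succ_eq_map, List.map_map, Function.comp_def]

lemma nearSplits_cons (x : ℕ) (l : List ℕ) :
    nearSplits (x :: l) = (List.range (x - 1)).map (fun j => ([j+1], (x - (j+1)) :: l))
      ++ (nearSplits l).map (fun p => (x :: p.1, p.2)) := by
  simp [nearSplits, List.range_succ_eq_map, List.map_map, Function.comp_def, List.map_flatten]

lemma sum_range_add {M : Type*} [AddCommMonoid M] (f : ℕ → M) (m n : ℕ) :
    ∑ i ∈ Finset.range (m + n), f i
      = (∑ i ∈ Finset.range m, f i) + ∑ i ∈ Finset.range n, f (m + i) := by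
  induction n with
  | zero => simp
  | succ n ih => rw [← Nat.add_assoc, Finset.sum_range_succ, ih, Finset.sum_range_succ, add_assoc]

lemma list_range_sum {M : Type*} [AddCommMonoid M] (f : ℕ → M) (n : ℕ) :
    ((List.range n).map f).sum = ∑ i ∈ Finset.range n, f i := by
  rw [Finset.sum_range, ← List.sum_ofFn]
  rw [List.ofFn_eq_map, ← show (List.finRange n).map (fun i : Fin n => (i : ℕ)) = List.range n from
    List.ext_getElem (by simp) (by simp), List.map_map]
  rfl

lemma splits_sum {M : Type*} [AddCommMonoid M] :
    ∀ (a : List ℕ) (f : List ℕ × List ℕ → M), (∀ x ∈ a, 0 < x) →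
      ((splits a).map f).sum = ∑ k ∈ Finset.range (a.sum + 1), f (sp1 a k, sp2 a k) := by
  intro a
  induction a with
  | nil => intro f _; simp [splits, concatSplits, nearSplits]
  | cons x l ih =>
    intro f ha
    have hx : 0 < x := ha x (List.mem_cons_self)
    have hl : ∀ y ∈ l, 0 < y := fun y hy => ha y (List.mem_cons_of_mem _ hy)
    have key := ih (fun p => f (x :: p.1, p.2)) hl
    rw [splits, concatSplits_cons, nearSplits_cons]
    simp only [List.map_append, List.map_cons, List.sum_append, List.sum_cons, List.map_map]
    have hkey : (List.map (f ∘ fun p => (x :: p.1, p.2)) (concatSplits l)).sum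
        + (List.map (f ∘ fun p => (x :: p.1, p.2)) (nearSplits l)).sum
        = ∑ k ∈ Finset.range (l.sum + 1), f (x :: sp1 l k, sp2 l k) := by
      rw [← List.sum_append, ← List.map_append]
      exact key
    -- RHS decomposition
    have hsum : x + l.sum + 1 = x + (l.sum + 1) := by omega
    rw [hsum, sum_range_add]
    have h0 : (∑ i ∈ Finset.range x, f (sp1 (x :: l) i, sp2 (x :: l) i))
        = f ([], x :: l) +
          ∑ i ∈ Finset.range (x - 1), f ([i + 1], (x - (i + 1)) :: l) := by
      obtain ⟨y, rfl⟩ : ∃ y, x = y + 1 := ⟨x - 1, by omega⟩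
      rw [Finset.sum_range_succ']
      simp only [Nat.add_sub_cancel]
      rw [add_comm]
      congr 1
      · apply Finset.sum_congr rfl
        intro i hi
        rw [sp1_cons_lt l (Nat.succ_pos i) (by simp at hi; omega),
          sp2_cons_lt l (Nat.succ_pos i) (by simp at hi; omega)]
    have h1 : (∑ i ∈ Finset.range (l.sum + 1), f (sp1 (x :: l) (x + i), sp2 (x :: l) (x + i)))
        = ∑ k ∈ Finset.range (l.sum + 1), f (x :: sp1 l k, sp2 l k) := by
      apply Finset.sum_congr rfl
      intro i _
      rw [sp1_cons_ge l (by omega) (by omega), sp2_cons_ge l (by omega) (by omega),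
        Nat.add_sub_cancel_left]
    rw [h0, h1, ← hkey]
    simp only [Function.comp_def]
    rw [list_range_sum (fun j => f ([j + 1], (x - (j + 1)) :: l)) (x - 1)]
    abel


/-! ### The coproduct on explicit split data -/

noncomputable def X1 : HComp := MvPolynomial.X (⟨[1], by simp⟩ : CompGen)

lemma emb_short {l : List ℕ} (h : l.length ≤ 1) : emb l = X1 ^ l.sum := by
  rw [emb, dif_neg]
  · rfl
  · rintro ⟨-, h2⟩; omega

lemma coprodGen_eq {a : List ℕ} (ha : ∀ x ∈ a, 0 < x) :
    coprodGen a = ∑ k ∈ Finset.range (a.sum + 1),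
      ((a.sum.choose k : ℝ)) • (emb (sp1 a k) ⊗ₜ[ℝ] emb (sp2 a k)) := by
  rw [coprodGen, splits_sum a _ ha]
  apply Finset.sum_congr rfl
  intro k hk
  simp only [Finset.mem_range] at hk
  rw [sp1_sum, min_eq_left (by omega)]

lemma sp1_single_len (m k : ℕ) : (sp1 [m] k).length ≤ 1 := by
  cases k with
  | zero => simp
  | succ k => simp only [sp1]; split <;> simp

lemma sp2_single_len (m k : ℕ) : (sp2 [m] k).length ≤ 1 := by
  cases k with
  | zero => simp
  | succ k => simp only [sp2]; split <;> simp

lemma coprodGen_single {m : ℕ} (hm : 0 < m) :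
    coprodGen [m] = ∑ k ∈ Finset.range (m + 1),
      ((m.choose k : ℝ)) • ((X1 ^ k) ⊗ₜ[ℝ] (X1 ^ (m - k))) := by
  rw [coprodGen_eq (by simpa using hm)]
  simp only [List.sum_cons, List.sum_nil, Nat.add_zero]
  apply Finset.sum_congr rfl
  intro k hk
  simp only [Finset.mem_range] at hk
  rw [emb_short (sp1_single_len m k), emb_short (sp2_single_len m k),
    sp1_sum, sp2_sum, min_eq_left (by simp; omega)]
  simp

lemma coprodGen_one : coprodGen [1] = X1 ⊗ₜ[ℝ] 1 + 1 ⊗ₜ[ℝ] X1 := by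
  rw [coprodGen_single one_pos]
  rw [Finset.sum_range_succ, Finset.sum_range_one]
  simp [add_comm]

lemma coprod_X1 : coprod X1 = X1 ⊗ₜ[ℝ] 1 + 1 ⊗ₜ[ℝ] X1 := by
  have h : coprod X1 = coprodGen [1] := by
    simp only [coprod, X1, MvPolynomial.aeval_X]
  rw [h, coprodGen_one]

lemma coprod_X1_pow (m : ℕ) :
    coprod (X1 ^ m) = ∑ k ∈ Finset.range (m + 1),
      ((m.choose k : ℝ)) • ((X1 ^ k) ⊗ₜ[ℝ] (X1 ^ (m - k))) := by
  rw [map_pow, coprod_X1, add_pow]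
  apply Finset.sum_congr rfl
  intro k hk
  rw [Algebra.TensorProduct.tmul_pow, Algebra.TensorProduct.tmul_pow,
    Algebra.TensorProduct.tmul_mul_tmul, one_pow, one_pow, one_mul, mul_one,
    mul_comm, ← nsmul_eq_mul, ← Nat.cast_smul_eq_nsmul ℝ]

lemma coprod_emb {l : List ℕ} (hl : ∀ x ∈ l, 0 < x) : coprod (emb l) = coprodGen l := by
  by_cases h : 1 < l.length
  · rw [emb, dif_pos ⟨hl, h⟩, coprod, MvPolynomial.aeval_X]
  · rcases l with _ | ⟨m, _ | ⟨m2, t⟩⟩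
    · rw [emb_short (by simp), List.sum_nil, coprod_X1_pow]
      rw [coprodGen, splits]
      simp [concatSplits, nearSplits, emb_short]
    · have hm : 0 < m := hl m (List.mem_cons_self)
      rw [emb_short (by simp), List.sum_cons, List.sum_nil, Nat.add_zero,
        coprod_X1_pow, coprodGen_single hm]
    · exact absurd (by simp) h

set_option maxHeartbeats 1000000 in
set_option synthInstance.maxHeartbeats 400000 in
/-- The coproduct `Δ(α) = ∑ C(|α|,|β|) β ⊗ γ` is coassociative on the free commutative
algebra generated by integer compositions. -/
theorem coprod_coassoc :
    (Algebra.TensorProduct.assoc ℝ ℝ ℝ HComp HComp HComp).toAlgHom.comp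
        ((Algebra.TensorProduct.map coprod (AlgHom.id ℝ HComp)).comp coprod) =
      (Algebra.TensorProduct.map (AlgHom.id ℝ HComp) coprod).comp coprod := by
  apply MvPolynomial.algHom_ext
  rintro ⟨a, ha, hgen⟩
  simp only [AlgHom.comp_apply, AlgEquiv.toAlgHom_eq_coe, AlgHom.coe_coe]
  have h0 : coprod (MvPolynomial.X ⟨a, ha, hgen⟩) = coprodGen a := by
    simp only [coprod, MvPolynomial.aeval_X]
  rw [h0]
  set g : ℕ → ℕ → HComp ⊗[ℝ] (HComp ⊗[ℝ] HComp) := fun j k =>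
    ((a.sum.choose k : ℝ) * (k.choose j : ℝ)) •
      (emb (sp1 a j) ⊗ₜ[ℝ] (emb (sp1 (sp2 a j) (k - j)) ⊗ₜ[ℝ] emb (sp2 a k))) with hg
  have LHS_eq : (Algebra.TensorProduct.assoc ℝ ℝ ℝ HComp HComp HComp)
      ((Algebra.TensorProduct.map coprod (AlgHom.id ℝ HComp)) (coprodGen a)) =
      ∑ k ∈ Finset.range (a.sum + 1), ∑ j ∈ Finset.range (k + 1), g j k := by
    rw [coprodGen_eq ha, map_sum, map_sum]
    apply Finset.sum_congr rfl
    intro k hk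
    simp only [Finset.mem_range] at hk
    rw [map_smul, Algebra.TensorProduct.map_tmul, AlgHom.id_apply,
      coprod_emb (sp1_pos ha k), coprodGen_eq (sp1_pos ha k), sp1_sum,
      min_eq_left (by omega), TensorProduct.sum_tmul, map_smul, map_sum, Finset.smul_sum]
    apply Finset.sum_congr rfl
    intro j hj
    simp only [Finset.mem_range] at hj
    rw [← smul_tmul', map_smul, Algebra.TensorProduct.assoc_tmul,
      sp1_sp1 a (by omega : j ≤ k), sp2_sp1 a (by omega : j ≤ k), smul_smul]
  have RHS_eq : (Algebra.TensorProduct.map (AlgHom.id ℝ HComp) coprod) (coprodGen a) =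
      ∑ j ∈ Finset.range (a.sum + 1), ∑ i ∈ Finset.range (a.sum - j + 1), g j (j + i) := by
    rw [coprodGen_eq ha, map_sum]
    apply Finset.sum_congr rfl
    intro j hj
    simp only [Finset.mem_range] at hj
    rw [map_smul, Algebra.TensorProduct.map_tmul, AlgHom.id_apply,
      coprod_emb (sp2_pos ha j), coprodGen_eq (sp2_pos ha j), sp2_sum,
      TensorProduct.tmul_sum, Finset.smul_sum]
    apply Finset.sum_congr rfl
    intro i hi
    simp only [Finset.mem_range] at hi
    rw [TensorProduct.tmul_smul, smul_smul]
    simp only [hg]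
    have e2 : j + i - j = i := by omega
    have e1 : sp2 (sp2 a j) i = sp2 a (j + i) := by
      have h := sp2_sp2 a (j := j) (k := j + i) (by omega)
      rwa [e2] at h
    have e3 : ((a.sum.choose (j + i) : ℝ)) * (((j + i).choose j : ℝ))
        = (a.sum.choose j : ℝ) * ((a.sum - j).choose i : ℝ) := by
      have := Nat.choose_mul (n := a.sum) (k := j + i) (s := j) (by omega)
      simp only [Nat.add_sub_cancel_left] at this
      exact_mod_cast congrArg (Nat.cast : ℕ → ℝ) this
    rw [e2, e1, e3]
  erw [LHS_eq]; rw [RHS_eq]; simp only [Finset.range_eq_Ico]; rw [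
    ← Finset.sum_Ico_Ico_comm 0 (a.sum + 1) (fun j k => g j k)]
  apply Finset.sum_congr rfl
  intro j hj
  simp only [Finset.mem_Ico] at hj
  rw [Finset.sum_Ico_eq_sum_range]
  have hnj : a.sum + 1 - j = a.sum - j + 1 := by omega
  rw [hnj, ← Finset.range_eq_Ico]
end

section
/- Let b = (b_α) and c = (c_α) be families of scalars indexed by compositions (including the empty composition). Define a_α = ∑ C(|α|, |β|) b_β c_γ, summed over pairs (β, γ) with β·γ = α or β⊙γ = α. Then in the completion of NSym, (∑_β (b_β/|β|!) R_β)(∑_γ (c_γ/|γ|!) R_γ) = ∑_α (a_α/|α|!) R_α. -/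
/-- Integer compositions: lists of positive integers. -/
abbrev Comp := {l : List ℕ // ∀ x ∈ l, 0 < x}

/-- `(β, γ)` is a splitting of `α` if `β·γ = α` (concatenation) or `β⊙γ = α`
(near-concatenation). -/
def SplitOf (β γ α : Comp) : Prop :=
  β.1 ++ γ.1 = α.1 ∨ (β.1 ≠ [] ∧ γ.1 ≠ [] ∧ nearConcat β.1 γ.1 = α.1)

/-- The product of formal series `∑ f(α) R_α` in the completion of NSym, induced by the
ribbon product `R_β R_γ = R_{β·γ} + R_{β⊙γ}`. -/
noncomputable def mulS (f g : Comp → ℝ) : Comp → ℝ :=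
  fun α => ∑ᶠ (p : Comp × Comp) (_ : SplitOf p.1 p.2 α), f p.1 * g p.2

/-- The unit series `R_∅`. -/
noncomputable def oneS : Comp → ℝ := fun α => if α.1 = [] then 1 else 0

/-- The empty composition. -/
def emptyComp : Comp := ⟨[], by simp⟩

lemma sum_of_split {β γ α : Comp} (h : SplitOf β γ α) :
    β.1.sum + γ.1.sum = α.1.sum := by
  rcases h with h | ⟨hβ, hγ, h⟩
  · rw [← h, List.sum_append]
  · rw [← h]
    unfold nearConcat
    rcases List.exists_cons_of_ne_nil hγ with ⟨g, t, hg⟩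
    rw [hg]
    conv_lhs => rw [← List.dropLast_append_getLast hβ]
    simp [List.getLastD_eq_getLast?, List.getLast?_eq_getLast hβ, List.sum_append]
    ring

/-- Multiplying the exponential generating functions `∑ (b_β/|β|!) R_β` and
`∑ (c_γ/|γ|!) R_γ` in the completion of NSym gives `∑ (a_α/|α|!) R_α`, where
`a_α = ∑ C(|α|,|β|) b_β c_γ` over all splittings `β·γ = α` or `β⊙γ = α`. -/
theorem mul_egf_series (b c : Comp → ℝ) :
    mulS (fun β => b β / (Nat.factorial β.1.sum)) (fun γ => c γ / (Nat.factorial γ.1.sum)) =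
      fun α => (∑ᶠ (p : Comp × Comp) (_ : SplitOf p.1 p.2 α),
          (α.1.sum.choose p.1.1.sum : ℝ) * b p.1 * c p.2) / (Nat.factorial α.1.sum) := by
  classical
  funext α
  rw [div_eq_inv_mul, ← smul_eq_mul, smul_finsum]
  unfold mulS
  refine finsum_congr fun p => ?_
  rw [smul_finsum]
  refine finsum_congr fun hp => ?_
  have hsum := sum_of_split hp
  have hle : p.1.1.sum ≤ α.1.sum := by omega
  have hch : (α.1.sum.choose p.1.1.sum : ℝ) =
      (α.1.sum.factorial : ℝ) / ((p.1.1.sum.factorial : ℝ) * ((α.1.sum - p.1.1.sum).factorial : ℝ)) := by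
    rw [Nat.cast_choose ℝ hle]
  have h2 : α.1.sum - p.1.1.sum = p.2.1.sum := by omega
  rw [smul_eq_mul, hch, h2]
  have f1 : (p.1.1.sum.factorial : ℝ) ≠ 0 := Nat.cast_ne_zero.2 (Nat.factorial_ne_zero _)
  have f2 : (p.2.1.sum.factorial : ℝ) ≠ 0 := Nat.cast_ne_zero.2 (Nat.factorial_ne_zero _)
  have f3 : (α.1.sum.factorial : ℝ) ≠ 0 := Nat.cast_ne_zero.2 (Nat.factorial_ne_zero _)
  field_simp
end

section
/- The set G of elements ∑_α c_α R_α in the completion of NSym with c_∅ = 1 and n! · c_{(n)} = c_{(1)}^n for all n > 1 is a subgroup of the group of invertible elements under multiplication. -/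
/-- The one-part composition `(n)` for `n ≥ 1`. -/
def singleComp (n : ℕ) (hn : 0 < n) : Comp := ⟨[n], by simpa using hn⟩

/-- Membership in `G`: `c_∅ = 1` and `n! · c_{(n)} = c_{(1)}^n` for all `n > 1`. -/
def memG (f : Comp → ℝ) : Prop :=
  f emptyComp = 1 ∧ ∀ n : ℕ, ∀ hn : 1 < n,
    (Nat.factorial n : ℝ) * f (singleComp n (Nat.zero_lt_one.trans hn)) = (f (singleComp 1 one_pos)) ^ n


/-! A splitting `(β, γ)` of `α` is determined by the weight `a = |β|`: it is obtained by cutting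
the ribbon `α` after its `a`-th cell, and the two pieces are glued back by concatenation or by
near-concatenation according to whether the cut falls between two parts or inside one. Hence the
product is the cut convolution `(f g)(α) = ∑_{a ≤ |α|} f(α_{≤a}) g(α_{>a})`, which is unital and
associative, and a series with `c_∅ = 1` has a right inverse by recursion on `|α|`, hence a
two-sided one.

The cuts of a one-part composition `(n)` are `((a), (n - a))`, so `f ↦ ∑ₙ c_{(n)} Xⁿ` is
multiplicative into `ℝ⟦X⟧`, and the defining condition of `G` says exactly that this series is
`exp (c X)` with `c = c_{(1)}`. Closure of `G` under products and inverses is then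
`exp (a X) exp (b X) = exp ((a + b) X)`. -/

open Finset PowerSeries
open scoped Nat

lemma nearConcat_cons_s17 (y : ℕ) {m : List ℕ} (hm : m ≠ []) (γ : List ℕ) :
    nearConcat (y :: m) γ = y :: nearConcat m γ := by
  obtain ⟨z, m, rfl⟩ := List.exists_cons_of_ne_nil hm
  simp [nearConcat]

lemma nearConcat_append_singleton (δ : List ℕ) (b c : ℕ) (t : List ℕ) :
    nearConcat (δ ++ [b]) (c :: t) = δ ++ (b + c) :: t := by
  simp [nearConcat]

namespace List

/-- `l.cutLeft a` and `l.cutRight a` are the pieces of the ribbon `l` to the left and to the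
right of a cut after its `a`-th cell. -/
def cutLeft : List ℕ → ℕ → List ℕ
  | [], _ => []
  | x :: xs, a => if a = 0 then [] else if a < x then [a] else x :: cutLeft xs (a - x)

def cutRight : List ℕ → ℕ → List ℕ
  | [], _ => []
  | x :: xs, a => if a = 0 then x :: xs else if a < x then (x - a) :: xs else cutRight xs (a - x)

variable {a b : ℕ}

@[simp] lemma cutLeft_zero (l : List ℕ) : l.cutLeft 0 = [] := by cases l <;> simp [cutLeft]

@[simp] lemma cutRight_zero (l : List ℕ) : l.cutRight 0 = l := by cases l <;> simp [cutRight]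

lemma pos_of_mem_cutLeft {l : List ℕ} (hl : ∀ x ∈ l, 0 < x) (a : ℕ) :
    ∀ x ∈ l.cutLeft a, 0 < x := by
  induction l generalizing a with
  | nil => simp [cutLeft]
  | cons y ys ih =>
    simp only [mem_cons, forall_eq_or_imp] at hl
    unfold cutLeft
    split_ifs with h0 h1
    · simp
    · simpa using Nat.pos_of_ne_zero h0
    · simpa [hl.1] using ih hl.2 _

lemma pos_of_mem_cutRight {l : List ℕ} (hl : ∀ x ∈ l, 0 < x) (a : ℕ) :
    ∀ x ∈ l.cutRight a, 0 < x := by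
  induction l generalizing a with
  | nil => simp [cutRight]
  | cons y ys ih =>
    simp only [mem_cons, forall_eq_or_imp] at hl
    unfold cutRight
    split_ifs with h0 h1
    · simpa using hl
    · simpa [h1] using hl.2
    · exact ih hl.2 _

lemma sum_cutLeft {l : List ℕ} (h : a ≤ l.sum) : (l.cutLeft a).sum = a := by
  induction l generalizing a with
  | nil => simp_all [cutLeft]
  | cons y ys ih =>
    simp only [sum_cons] at h
    unfold cutLeft
    split_ifs <;> simp [ih (a := a - y) (by omega)] <;> omega

lemma sum_cutRight (l : List ℕ) (a : ℕ) : (l.cutRight a).sum = l.sum - a := by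
  induction l generalizing a with
  | nil => simp [cutRight]
  | cons y ys ih =>
    unfold cutRight
    split_ifs <;> simp [ih] <;> omega

lemma cutLeft_append {δ : List ℕ} (hδ : ∀ x ∈ δ, 0 < x) (l : List ℕ) (a : ℕ) :
    (δ ++ l).cutLeft (δ.sum + a) = δ ++ l.cutLeft a := by
  induction δ with
  | nil => simp
  | cons y δ ih =>
    simp only [mem_cons, forall_eq_or_imp] at hδ
    simp only [cons_append, sum_cons, cutLeft, ← ih hδ.2]
    split_ifs <;> first | omega | congr 2; omega

lemma cutRight_append {δ : List ℕ} (hδ : ∀ x ∈ δ, 0 < x) (l : List ℕ) (a : ℕ) :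
    (δ ++ l).cutRight (δ.sum + a) = l.cutRight a := by
  induction δ with
  | nil => simp
  | cons y δ ih =>
    simp only [mem_cons, forall_eq_or_imp] at hδ
    simp only [cons_append, sum_cons, cutRight, ← ih hδ.2]
    split_ifs <;> first | omega | congr 1; omega

lemma append_cut_or_nearConcat_cut (l : List ℕ) (a : ℕ) :
    l.cutLeft a ++ l.cutRight a = l ∨
      l.cutLeft a ≠ [] ∧ l.cutRight a ≠ [] ∧ nearConcat (l.cutLeft a) (l.cutRight a) = l := by
  induction l generalizing a with
  | nil => simp [cutLeft, cutRight]
  | cons y ys ih =>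
    unfold cutLeft cutRight
    split_ifs with h0 h1
    · simp
    · right
      simp [nearConcat, Nat.add_sub_cancel' h1.le]
    · rcases ih (a - y) with h | ⟨hL, hR, h⟩
      · simp [h]
      · exact .inr ⟨cons_ne_nil _ _, hR, by rw [nearConcat_cons_s17 y hL, h]⟩

lemma cutLeft_cutLeft (l : List ℕ) (hab : a ≤ b) : (l.cutLeft b).cutLeft a = l.cutLeft a := by
  induction l generalizing a b with
  | nil => simp [cutLeft]
  | cons y ys ih =>
    rcases eq_or_ne a 0 with rfl | ha
    · simp
    have hb : b ≠ 0 := by omega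
    by_cases hby : b < y
    · simp [cutLeft, ha, hb, hby]
      split_ifs <;> simp <;> omega
    · simp [cutLeft, ha, hb, hby, ih (Nat.sub_le_sub_right hab y)]

lemma cutRight_cutRight (l : List ℕ) (hab : a ≤ b) :
    (l.cutRight a).cutRight (b - a) = l.cutRight b := by
  induction l generalizing a b with
  | nil => simp [cutRight]
  | cons y ys ih =>
    rcases eq_or_ne a 0 with rfl | ha
    · simp
    rcases hab.eq_or_lt with rfl | hab
    · simp
    have hb : b ≠ 0 := by omega
    have hba : b - a ≠ 0 := by omega
    by_cases hay : a < y
    · by_cases hby : b < y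
      · simp [cutRight, ha, hb, hba, hay, hby, show b - a < y - a by omega]
        omega
      · simp [cutRight, ha, hb, hba, hay, hby, show ¬ b - a < y - a by omega,
          show b - a - (y - a) = b - y by omega]
    · simp [cutRight, ha, hb, hay, ← ih (Nat.sub_le_sub_right hab.le y),
        show ¬ b < y by omega, show b - y - (a - y) = b - a by omega]

lemma cutRight_cutLeft (l : List ℕ) (hab : a ≤ b) :
    (l.cutLeft b).cutRight a = (l.cutRight a).cutLeft (b - a) := by
  induction l generalizing a b with
  | nil => simp [cutRight, cutLeft]
  | cons y ys ih =>
    rcases eq_or_ne a 0 with rfl | ha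
    · simp
    have hb : b ≠ 0 := by omega
    by_cases hay : a < y
    · by_cases hby : b < y
      · rcases hab.lt_or_eq with hab | rfl
        · simp [cutRight, cutLeft, ha, hb, hay, hby, hab, show b - a ≠ 0 by omega,
            show b - a < y - a by omega]
        · simp [cutRight, cutLeft, ha, hay]
      · simp [cutRight, cutLeft, ha, hb, hay, hby, show b - a ≠ 0 by omega,
          show ¬ b - a < y - a by omega, show b - a - (y - a) = b - y by omega]
    · simp [cutRight, cutLeft, ha, hb, hay, ih (Nat.sub_le_sub_right hab y),
        show ¬ b < y by omega, show b - y - (a - y) = b - a by omega]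

end List

namespace Comp

variable {α : Comp} {a b : ℕ}

lemma eq_emptyComp_iff : α = emptyComp ↔ α.1.sum = 0 := by
  refine ⟨fun h => h ▸ rfl, fun h => Subtype.ext ?_⟩
  by_contra hne
  exact (List.sum_pos α.1 α.2 hne).ne' h

def cutLeft (α : Comp) (a : ℕ) : Comp := ⟨α.1.cutLeft a, List.pos_of_mem_cutLeft α.2 a⟩

def cutRight (α : Comp) (a : ℕ) : Comp := ⟨α.1.cutRight a, List.pos_of_mem_cutRight α.2 a⟩

lemma sum_cutLeft (ha : a ≤ α.1.sum) : (cutLeft α a).1.sum = a :=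
  List.sum_cutLeft ha

lemma sum_cutRight (α : Comp) (a : ℕ) : (cutRight α a).1.sum = α.1.sum - a :=
  List.sum_cutRight α.1 a

@[simp] lemma cutLeft_zero (α : Comp) : cutLeft α 0 = emptyComp :=
  Subtype.ext (List.cutLeft_zero _)

@[simp] lemma cutRight_zero (α : Comp) : cutRight α 0 = α := Subtype.ext (List.cutRight_zero _)

lemma splitOf_cut (α : Comp) (a : ℕ) : SplitOf (cutLeft α a) (cutRight α a) α :=
  List.append_cut_or_nearConcat_cut α.1 a

lemma eq_cut_of_splitOf {β γ α : Comp} (h : SplitOf β γ α) :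
    β.1.sum ≤ α.1.sum ∧ cutLeft α β.1.sum = β ∧ cutRight α β.1.sum = γ := by
  rcases h with h | ⟨hβ, hγ, h⟩
  · have hL := List.cutLeft_append β.2 γ.1 0
    have hR := List.cutRight_append β.2 γ.1 0
    simp only [h, add_zero, List.cutLeft_zero, List.append_nil, List.cutRight_zero] at hL hR
    exact ⟨by simp [← h], Subtype.ext hL, Subtype.ext hR⟩
  · obtain ⟨δ, b, hδb⟩ := (List.eq_nil_or_concat' β.1).resolve_left hβ
    obtain ⟨c, t, hct⟩ := List.exists_cons_of_ne_nil hγ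
    have hδ : ∀ x ∈ δ, 0 < x := fun x hx => β.2 x (by simp [hδb, hx])
    have hb : 0 < b := β.2 b (by simp [hδb])
    have hc : 0 < c := γ.2 c (by simp [hct])
    rw [hδb, hct, nearConcat_append_singleton] at h
    have hL := List.cutLeft_append hδ ((b + c) :: t) b
    have hR := List.cutRight_append hδ ((b + c) :: t) b
    simp only [h, List.cutLeft, List.cutRight, hb.ne', if_pos (show b < b + c by omega),
      if_false, Nat.add_sub_cancel_left] at hL hR
    have hsum : β.1.sum = δ.sum + b := by simp [hδb]
    refine ⟨by simp [← h, hsum, add_assoc], Subtype.ext ?_, Subtype.ext ?_⟩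
    · rw [hsum, hδb]; exact hL
    · rw [hsum, hct]; exact hR

lemma splitOf_iff {β γ α : Comp} :
    SplitOf β γ α ↔ ∃ a ≤ α.1.sum, cutLeft α a = β ∧ cutRight α a = γ := by
  refine ⟨fun h => ⟨_, eq_cut_of_splitOf h⟩, ?_⟩
  rintro ⟨a, -, rfl, rfl⟩
  exact splitOf_cut α a

lemma cutLeft_sum_self (α : Comp) : cutLeft α α.1.sum = α :=
  (eq_cut_of_splitOf (Or.inl (List.append_nil α.1) : SplitOf α emptyComp α)).2.1

lemma cutLeft_eq_empty_iff (ha : a ≤ α.1.sum) : cutLeft α a = emptyComp ↔ a = 0 := by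
  rw [eq_emptyComp_iff, sum_cutLeft ha]

lemma cutRight_eq_empty_iff : cutRight α a = emptyComp ↔ α.1.sum ≤ a := by
  rw [eq_emptyComp_iff, sum_cutRight, Nat.sub_eq_zero_iff_le]

lemma cutLeft_cutLeft (α : Comp) (hab : a ≤ b) : cutLeft (cutLeft α b) a = cutLeft α a :=
  Subtype.ext (List.cutLeft_cutLeft α.1 hab)

lemma cutRight_cutRight (α : Comp) (hab : a ≤ b) :
    cutRight (cutRight α a) (b - a) = cutRight α b :=
  Subtype.ext (List.cutRight_cutRight α.1 hab)

lemma cutRight_cutLeft (α : Comp) (hab : a ≤ b) :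
    cutRight (cutLeft α b) a = cutLeft (cutRight α a) (b - a) :=
  Subtype.ext (List.cutRight_cutLeft α.1 hab)

def single (n : ℕ) : Comp := if h : n = 0 then emptyComp else singleComp n (Nat.pos_of_ne_zero h)

@[simp] lemma single_zero : single 0 = emptyComp := rfl

lemma single_of_pos {n : ℕ} (hn : 0 < n) : single n = singleComp n hn := by
  rw [single, dif_neg hn.ne']

lemma coe_single (n : ℕ) : (single n).1 = if n = 0 then [] else [n] := by
  unfold single
  split_ifs <;> rfl

lemma sum_single (n : ℕ) : (single n).1.sum = n := by
  rw [coe_single]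
  split_ifs with h <;> simp [h]

lemma cutLeft_single {n a : ℕ} (ha : a ≤ n) : cutLeft (single n) a = single a := by
  apply Subtype.ext
  simp only [cutLeft, coe_single]
  rcases eq_or_ne a 0 with rfl | ha0
  · simp
  rcases ha.lt_or_eq with ha | rfl
  · simp [List.cutLeft, ha0, ha, show n ≠ 0 by omega]
  · simp [List.cutLeft, ha0]

lemma cutRight_single (n a : ℕ) : cutRight (single n) a = single (n - a) := by
  apply Subtype.ext
  simp only [cutRight, coe_single]
  rcases eq_or_ne a 0 with rfl | ha0
  · simp
  by_cases ha : a < n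
  · simp [List.cutRight, ha0, ha, show n ≠ 0 by omega, show n - a ≠ 0 by omega]
  · split_ifs <;> simp_all [List.cutRight]

end Comp

open Comp

lemma mulS_eq_sum_range (f g : Comp → ℝ) (α : Comp) :
    mulS f g α = ∑ a ∈ range (α.1.sum + 1), f (cutLeft α a) * g (cutRight α a) := by
  have hsplits : {p : Comp × Comp | SplitOf p.1 p.2 α} =
      (fun a => (cutLeft α a, cutRight α a)) '' ↑(range (α.1.sum + 1)) := by
    ext ⟨β, γ⟩
    simp [splitOf_iff]
  have hinj : Set.InjOn (fun a => (cutLeft α a, cutRight α a))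
      ↑(range (α.1.sum + 1)) := by
    intro a ha b hb hab
    simp only [coe_range, Set.mem_Iio, Nat.lt_succ_iff] at ha hb
    simpa [sum_cutLeft ha, sum_cutLeft hb] using congrArg (fun p => p.1.1.sum) hab
  change ∑ᶠ (p : Comp × Comp) (_ : p ∈ {p : Comp × Comp | SplitOf p.1 p.2 α}),
    f p.1 * g p.2 = _
  rw [hsplits, finsum_mem_image hinj, finsum_mem_coe_finset]

lemma oneS_apply (α : Comp) : oneS α = if α = emptyComp then 1 else 0 := by
  simp only [oneS, Subtype.ext_iff]
  rfl

lemma mulS_oneS (f : Comp → ℝ) : mulS f oneS = f := by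
  funext α
  rw [mulS_eq_sum_range, sum_eq_single_of_mem α.1.sum (by simp)]
  · simp [oneS_apply, cutRight_eq_empty_iff, cutLeft_sum_self]
  · intro a ha hne
    simp only [mem_range] at ha
    simp [oneS_apply, cutRight_eq_empty_iff]
    omega

lemma oneS_mulS (f : Comp → ℝ) : mulS oneS f = f := by
  funext α
  rw [mulS_eq_sum_range, sum_eq_single_of_mem 0 (by simp)]
  · simp [oneS_apply]
  · intro a ha hne
    simp only [mem_range] at ha
    simp [oneS_apply, cutLeft_eq_empty_iff (Nat.lt_succ_iff.1 ha), hne]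

lemma mulS_assoc (f g h : Comp → ℝ) : mulS (mulS f g) h = mulS f (mulS g h) := by
  funext α
  set n := α.1.sum
  let F : ℕ → ℕ → ℝ := fun a b =>
    f (cutLeft α a) * g (cutLeft (cutRight α a) (b - a)) * h (cutRight α b)
  have hleft : mulS (mulS f g) h α = ∑ b ∈ Ico 0 (n + 1), ∑ a ∈ Ico 0 (b + 1), F a b := by
    rw [mulS_eq_sum_range, range_eq_Ico]
    refine sum_congr rfl fun b hb => ?_
    have hbn : b ≤ n := Nat.lt_succ_iff.1 (mem_Ico.1 hb).2
    rw [mulS_eq_sum_range, sum_cutLeft hbn, range_eq_Ico, sum_mul]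
    refine sum_congr rfl fun a ha => ?_
    have hab : a ≤ b := Nat.lt_succ_iff.1 (mem_Ico.1 ha).2
    rw [cutLeft_cutLeft _ hab, cutRight_cutLeft _ hab]
  have hright : mulS f (mulS g h) α = ∑ a ∈ Ico 0 (n + 1), ∑ b ∈ Ico a (n + 1), F a b := by
    rw [mulS_eq_sum_range, range_eq_Ico]
    refine sum_congr rfl fun a ha => ?_
    have han : a ≤ n := Nat.lt_succ_iff.1 (mem_Ico.1 ha).2
    rw [mulS_eq_sum_range, sum_cutRight, mul_sum, sum_Ico_eq_sum_range,
      show n + 1 - a = n - a + 1 by omega]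
    refine sum_congr rfl fun c _ => ?_
    simp only [F]
    rw [← cutRight_cutRight α (Nat.le_add_right a c), Nat.add_sub_cancel_left, mul_assoc]
  rw [hleft, hright, sum_Ico_Ico_comm]

noncomputable def rightInv (f : Comp → ℝ) (α : Comp) : ℝ :=
  if α.1.sum = 0 then 1
  else -∑ a ∈ range α.1.sum, f (cutLeft α (a + 1)) * rightInv f (cutRight α (a + 1))
termination_by α.1.sum
decreasing_by
  rw [sum_cutRight]
  omega

lemma rightInv_emptyComp (f : Comp → ℝ) : rightInv f emptyComp = 1 := by
  rw [rightInv]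
  exact if_pos rfl

lemma mulS_rightInv {f : Comp → ℝ} (hf : f emptyComp = 1) : mulS f (rightInv f) = oneS := by
  funext α
  rw [mulS_eq_sum_range, sum_range_succ', cutLeft_zero, cutRight_zero, hf, one_mul]
  by_cases hα : α.1.sum = 0
  · rw [hα, sum_range_zero, zero_add, rightInv, if_pos hα, oneS_apply,
      if_pos (eq_emptyComp_iff.2 hα)]
  · rw [rightInv, if_neg hα, add_neg_cancel, oneS_apply, if_neg (mt eq_emptyComp_iff.1 hα)]

lemma rightInv_mulS {f : Comp → ℝ} (hf : f emptyComp = 1) : mulS (rightInv f) f = oneS := by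
  set g := rightInv f
  have hg : mulS g (rightInv g) = oneS := mulS_rightInv (rightInv_emptyComp f)
  have hfg : f = rightInv g := calc
    f = mulS f (mulS g (rightInv g)) := by rw [hg, mulS_oneS]
    _ = mulS (mulS f g) (rightInv g) := (mulS_assoc f g _).symm
    _ = rightInv g := by rw [mulS_rightInv hf, oneS_mulS]
  rwa [hfg]

noncomputable def singleSeries (f : Comp → ℝ) : ℝ⟦X⟧ :=
  PowerSeries.mk fun n => f (single n)

@[simp] lemma coeff_singleSeries (f : Comp → ℝ) (n : ℕ) :
    coeff n (singleSeries f) = f (single n) :=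
  coeff_mk _ _

lemma singleSeries_mulS (f g : Comp → ℝ) :
    singleSeries (mulS f g) = singleSeries f * singleSeries g := by
  ext n
  rw [coeff_mul, Nat.sum_antidiagonal_eq_sum_range_succ_mk, coeff_singleSeries,
    mulS_eq_sum_range, sum_single]
  refine sum_congr rfl fun a ha => ?_
  rw [cutLeft_single (Nat.lt_succ_iff.1 (mem_range.1 ha)), cutRight_single, coeff_singleSeries,
    coeff_singleSeries]

lemma singleSeries_oneS : singleSeries oneS = 1 := by
  ext n
  simp [coeff_one, oneS_apply, eq_emptyComp_iff, sum_single]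

lemma rescale_zero_exp (A : Type*) [CommRing A] [Algebra ℚ A] : rescale (0 : A) (exp A) = 1 := by
  rw [rescale_zero_apply, constantCoeff_exp, map_one]

lemma coeff_rescale_exp {K : Type*} [Field K] [CharZero K] (c : K) (n : ℕ) :
    coeff n (rescale c (exp K)) = c ^ n / n ! := by
  simp [coeff_rescale, coeff_exp, div_eq_mul_inv]

lemma memG_iff_exists_rescale_exp (f : Comp → ℝ) :
    memG f ↔ ∃ c, singleSeries f = rescale c (exp ℝ) := by
  simp only [memG, PowerSeries.ext_iff, coeff_singleSeries, coeff_rescale_exp,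
    ← single_of_pos]
  constructor
  · rintro ⟨h0, hf⟩
    refine ⟨f (single 1), fun n => ?_⟩
    rcases lt_trichotomy n 1 with hn | rfl | hn
    · obtain rfl : n = 0 := by omega
      simpa using h0
    · simp
    · rw [eq_div_iff (by positivity), mul_comm]
      exact hf n hn
  · rintro ⟨c, hc⟩
    have h1 : f (single 1) = c := by simpa using hc 1
    refine ⟨by simpa using hc 0, fun n _ => ?_⟩
    rw [h1, hc n]
    field_simp

/-- `G` is a subgroup of the invertible elements of the completion of NSym: it contains
the unit, is closed under multiplication, and every element has a (two-sided) inverse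
in `G`. -/
theorem G_is_subgroup :
    memG oneS ∧
    (∀ f g : Comp → ℝ, memG f → memG g → memG (mulS f g)) ∧
    (∀ f : Comp → ℝ, memG f →
      ∃ g : Comp → ℝ, memG g ∧ mulS f g = oneS ∧ mulS g f = oneS) := by
  refine ⟨(memG_iff_exists_rescale_exp _).2 ⟨0, by rw [singleSeries_oneS, rescale_zero_exp ℝ]⟩,
    fun f g hf hg => ?_, fun f hf => ?_⟩
  · obtain ⟨a, ha⟩ := (memG_iff_exists_rescale_exp f).1 hf
    obtain ⟨b, hb⟩ := (memG_iff_exists_rescale_exp g).1 hg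
    rw [memG_iff_exists_rescale_exp, singleSeries_mulS, ha, hb]
    exact ⟨a + b, exp_mul_exp_eq_exp_add a b⟩
  · obtain ⟨c, hc⟩ := (memG_iff_exists_rescale_exp f).1 hf
    refine ⟨rightInv f, (memG_iff_exists_rescale_exp _).2 ⟨-c, ?_⟩, mulS_rightInv hf.1,
      rightInv_mulS hf.1⟩
    refine left_inv_eq_right_inv (a := singleSeries f) ?_ ?_
    · rw [← singleSeries_mulS, rightInv_mulS hf.1, singleSeries_oneS]
    · rw [hc, exp_mul_exp_eq_exp_add, add_neg_cancel, rescale_zero_exp ℝ]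
end
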